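/- In the discrete gluey scheme, $\gamma^n \le 0$ and $q^n \ge 0$ for all $n$, and moreover $q^n \gamma^n = 0$ for all $n \ge 1$: at every time step either the computed distance or the computed adhesion potential vanishes. -/

import Mathlib

/-! When `γ^n = 0` the projection is onto the half-line `q^n + h v ≥ 0`, so `ū^{n+1}` is either
the unconstrained velocity (then `λ^{n+1} = 0` and `γ^{n+1} = 0`) or makes `q^{n+1} = 0`;
when `γ^n < 0` the constraint is an equality and again `q^{n+1} = 0`. The truncation of `γ`
at `0` and the positive unsticking velocity keep `γ ≤ 0` and `q ≥ 0`. -/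

noncomputable section

/-- Discrete set of admissible velocities for the particle/plane gluey scheme. -/
def Kset (q γ h : ℝ) : Set ℝ :=
  if γ = 0 then {v | 0 ≤ q + h * v} else {v | q + h * v = 0}

/-- The particle/plane gluey algorithm: a priori velocity `u n + h f n`, projection onto
`Kset (q n) (γ n) h` giving `ubar (n+1)` and multiplier `lam (n+1)`, update of `γ`
with unsticking modification, and update of the position `q`. -/
structure GlueyScheme (m h : ℝ) where
  q : ℕ → ℝ
  u : ℕ → ℝ
  γ : ℕ → ℝ
  ubar : ℕ → ℝ
  γbar : ℕ → ℝ
  lam : ℕ → ℝ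
  f : ℕ → ℝ
  hm : 0 < m
  hh : 0 < h
  q0pos : 0 < q 0
  γ0 : γ 0 = 0
  lam0 : lam 0 = 0
  proj_mem : ∀ n, ubar (n + 1) ∈ Kset (q n) (γ n) h
  proj_min : ∀ n, ∀ v ∈ Kset (q n) (γ n) h,
    |ubar (n + 1) - (u n + h * f n)| ≤ |v - (u n + h * f n)|
  lam_def : ∀ n, m * (ubar (n + 1) - (u n + h * f n)) = h * lam (n + 1)
  γbar_def : ∀ n, γbar (n + 1) = γ n - h * lam (n + 1)
  unstick_le : ∀ n, γbar (n + 1) ≤ 0 → u (n + 1) = ubar (n + 1) ∧ γ (n + 1) = γbar (n + 1)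
  unstick_gt : ∀ n, 0 < γbar (n + 1) → u (n + 1) = γbar (n + 1) / m ∧ γ (n + 1) = 0
  q_update : ∀ n, q (n + 1) = q n + h * u (n + 1)

theorem eq_max_of_isMinOn_abs_sub_Ici {a w x : ℝ} (hx : x ∈ Set.Ici a)
    (hmin : IsMinOn (fun v => |v - w|) (Set.Ici a) x) : x = max w a := by
  rcases le_total a w with haw | hwa
  · have hxw : |x - w| ≤ 0 := by simpa using hmin (Set.mem_Ici.mpr haw)
    rw [max_eq_left haw]
    linarith [abs_nonpos_iff.mp hxw]
  · have hxa : |x - w| ≤ |a - w| := hmin Set.self_mem_Ici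
    rw [Set.mem_Ici] at hx
    rw [abs_of_nonneg (by linarith), abs_of_nonneg (by linarith)] at hxa
    rw [max_eq_right hwa]
    linarith

theorem Kset_zero_eq_Ici {q h : ℝ} (hh : 0 < h) : Kset q 0 h = Set.Ici (-q / h) := by
  ext v
  simp only [Kset, if_true, Set.mem_ofPred_eq, Set.mem_Ici, div_le_iff₀ hh]
  constructor <;> intro hv <;> linarith

theorem Kset_nonneg {q γ h v : ℝ} (hv : v ∈ Kset q γ h) : 0 ≤ q + h * v := by
  unfold Kset at hv
  split_ifs at hv
  exacts [hv, hv.ge]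

theorem Kset_of_ne_zero {q γ h v : ℝ} (hγ : γ ≠ 0) (hv : v ∈ Kset q γ h) : q + h * v = 0 := by
  simpa [Kset, hγ] using hv

namespace GlueyScheme

variable {m h : ℝ} (S : GlueyScheme m h)

theorem γ_nonpos (n : ℕ) : S.γ n ≤ 0 := by
  cases n with
  | zero => exact S.γ0.le
  | succ k =>
    rcases le_or_gt (S.γbar (k + 1)) 0 with hle | hgt
    · exact (S.unstick_le k hle).2 ▸ hle
    · exact (S.unstick_gt k hgt).2.le

theorem ubar_eq_max {n : ℕ} (hγ : S.γ n = 0) :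
    S.ubar (n + 1) = max (S.u n + h * S.f n) (-S.q n / h) := by
  have hK := Kset_zero_eq_Ici (q := S.q n) S.hh
  rw [← hγ] at hK
  apply eq_max_of_isMinOn_abs_sub_Ici (hK ▸ S.proj_mem n)
  exact fun v hv => S.proj_min n v (hK ▸ hv)

-- Complementary slackness of the projection onto `Kset`.
theorem lam_mul_gap_eq_zero (n : ℕ) : S.lam (n + 1) * (S.q n + h * S.ubar (n + 1)) = 0 := by
  by_cases hγ : S.γ n = 0
  · have hlam := S.lam_def n
    rcases max_choice (S.u n + h * S.f n) (-S.q n / h) with hmax | hmax <;>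
      rw [← S.ubar_eq_max hγ] at hmax
    · rw [hmax, sub_self, mul_zero] at hlam
      simp [(mul_eq_zero.mp hlam.symm).resolve_left S.hh.ne']
    · rw [hmax, mul_div_cancel₀ _ S.hh.ne']
      ring
  · rw [Kset_of_ne_zero hγ (S.proj_mem n), mul_zero]

theorem q_mul_γ_succ (n : ℕ) : S.q (n + 1) * S.γ (n + 1) = 0 := by
  rcases le_or_gt (S.γbar (n + 1)) 0 with hle | hgt
  · obtain ⟨hu, hγ⟩ := S.unstick_le n hle
    rw [S.q_update, hu, hγ, S.γbar_def]
    by_cases hγn : S.γ n = 0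
    · linear_combination (-h) * S.lam_mul_gap_eq_zero n + (S.q n + h * S.ubar (n + 1)) * hγn
    · rw [Kset_of_ne_zero hγn (S.proj_mem n), zero_mul]
  · rw [(S.unstick_gt n hgt).2, mul_zero]

theorem q_nonneg (n : ℕ) : 0 ≤ S.q n := by
  induction n with
  | zero => exact S.q0pos.le
  | succ k ih =>
    rw [S.q_update]
    rcases le_or_gt (S.γbar (k + 1)) 0 with hle | hgt
    · exact (S.unstick_le k hle).1 ▸ Kset_nonneg (S.proj_mem k)
    · have hu : 0 < S.u (k + 1) := (S.unstick_gt k hgt).1 ▸ div_pos hgt S.hm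
      exact add_nonneg ih (mul_pos S.hh hu).le

end GlueyScheme

/-- In the discrete gluey scheme, `γ^n ≤ 0` and `q^n ≥ 0` for all `n`, and
`q^n γ^n = 0` for all `n ≥ 1`. -/
theorem stmt5 (m h : ℝ) (S : GlueyScheme m h) :
    (∀ n : ℕ, S.γ n ≤ 0 ∧ 0 ≤ S.q n) ∧ (∀ n : ℕ, 1 ≤ n → S.q n * S.γ n = 0) := by
  refine ⟨fun n => ⟨S.γ_nonpos n, S.q_nonneg n⟩, fun n hn => ?_⟩
  obtain ⟨k, rfl⟩ := Nat.exists_eq_add_of_le' hn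
  exact S.q_mul_γ_succ k
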